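/- Let L ∈ ℂ^{n×n} be a unitary k-lower Hessenberg matrix and let U ∈ ℂ^{n×n} be unitary. Then there exist unitary matrices V and M such that LU = VM, where M is a unitary k-lower Hessenberg matrix and V is block diagonal of the form V = diag(V̂, I_k) with V̂ ∈ ℂ^{(n−k)×(n−k)} unitary. -/

import Mathlib

open Matrix

/-- A matrix is `k`-lower Hessenberg if its entries vanish above the `k`-th superdiagonal. -/
def IsKLowerHessenberg {m : ℕ} (k : ℕ) (L : Matrix (Fin m) (Fin m) ℂ) : Prop :=
  ∀ i j : Fin m, (i : ℕ) + k < (j : ℕ) → L i j = 0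

/-!
Write `n = m + k` and `A = L * U`. For `V = diag(V̂, I_k)` the rows of `M = Vᴴ * A` below the
first `m` are those of `A`, and the Hessenberg condition says nothing about them. The first `m`
rows are `V̂ᴴ` times the first `m` rows of `A`, and there the condition asks that `V̂ᴴ * B` be
lower triangular, where `B` is the `m × m` block of `A` in its first `m` rows and last `m`
columns. So `V̂` is the unitary factor of a QL factorization `B = V̂ R`, which Gram–Schmidt
produces when run on the columns of `B` from the last to the first.
-/

namespace Matrix

theorem exists_mem_unitaryGroup_isUpperTriangular_conjTranspose_mul {𝕜 ι : Type*} [RCLike 𝕜]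
    [LinearOrder ι] [Fintype ι] [DecidableEq ι] [LocallyFiniteOrderBot ι] (B : Matrix ι ι 𝕜) :
    ∃ Q ∈ unitaryGroup ι 𝕜, (Qᴴ * B).IsUpperTriangular := by
  have hdim := finrank_euclideanSpace (𝕜 := 𝕜) (ι := ι)
  let b := InnerProductSpace.gramSchmidtOrthonormalBasis hdim fun j ↦ WithLp.toLp 2 (Bᵀ j)
  refine ⟨(EuclideanSpace.basisFun ι 𝕜).toBasis.toMatrix b,
    (EuclideanSpace.basisFun ι 𝕜).toMatrix_orthonormalBasis_mem_unitary b, fun i j hji ↦ ?_⟩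
  have h := InnerProductSpace.gramSchmidtOrthonormalBasis_inv_triangular hdim
    (fun j ↦ WithLp.toLp 2 (Bᵀ j)) hji
  rw [EuclideanSpace.inner_eq_star_dotProduct] at h
  simpa [mul_apply, Module.Basis.toMatrix_apply, dotProduct, mul_comm] using h

theorem exists_mem_unitaryGroup_isLowerTriangular_conjTranspose_mul {𝕜 ι : Type*} [RCLike 𝕜]
    [LinearOrder ι] [Fintype ι] [DecidableEq ι] [LocallyFiniteOrderTop ι] (B : Matrix ι ι 𝕜) :
    ∃ Q ∈ unitaryGroup ι 𝕜, (Qᴴ * B).IsLowerTriangular :=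
  exists_mem_unitaryGroup_isUpperTriangular_conjTranspose_mul (ι := ιᵒᵈ) B

variable {α : Type*} {m k : ℕ}

def blockDiagOne [Zero α] [One α] (A : Matrix (Fin m) (Fin m) α) (k : ℕ) :
    Matrix (Fin (m + k)) (Fin (m + k)) α :=
  reindex finSumFinEquiv finSumFinEquiv (fromBlocks A 0 0 1)

theorem blockDiagOne_apply_of_le [Zero α] [One α] (A : Matrix (Fin m) (Fin m) α)
    {i j : Fin (m + k)} (h : m ≤ (i : ℕ) ∨ m ≤ (j : ℕ)) :
    blockDiagOne A k i j = if i = j then 1 else 0 := by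
  induction i using Fin.addCases <;> induction j using Fin.addCases
  · simp only [Fin.val_castAdd] at h
    omega
  all_goals simp [blockDiagOne, one_apply, Fin.ext_iff]
  all_goals omega

theorem blockDiagOne_mem_unitaryGroup [CommRing α] [StarRing α] {A : Matrix (Fin m) (Fin m) α}
    (hA : A ∈ unitaryGroup (Fin m) α) : blockDiagOne A k ∈ unitaryGroup (Fin (m + k)) α := by
  rw [mem_unitaryGroup_iff', star_eq_conjTranspose] at hA ⊢
  simp [blockDiagOne, fromBlocks_conjTranspose, fromBlocks_multiply, hA, fromBlocks_one]

theorem conjTranspose_blockDiagOne_mul_apply_castAdd [CommRing α] [StarRing α] {n : Type*}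
    [Fintype n] (Q : Matrix (Fin m) (Fin m) α) (A : Matrix (Fin (m + k)) n α) (a : Fin m) (j : n) :
    ((blockDiagOne Q k)ᴴ * A) (Fin.castAdd k a) j = (Qᴴ * A.submatrix (Fin.castAdd k) id) a j := by
  simp [blockDiagOne, mul_apply, Fin.sum_univ_add, fromBlocks]

end Matrix

theorem isKLowerHessenberg_conjTranspose_blockDiagOne_mul {m k : ℕ} (Q : Matrix (Fin m) (Fin m) ℂ)
    (A : Matrix (Fin (m + k)) (Fin (m + k)) ℂ)
    (hQA : (Qᴴ * A.submatrix (Fin.castAdd k) (Fin.addNat · k)).IsLowerTriangular) :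
    IsKLowerHessenberg k ((blockDiagOne Q k)ᴴ * A) := by
  intro i j hij
  obtain ⟨a, rfl⟩ : ∃ a : Fin m, Fin.castAdd k a = i := ⟨⟨i, by omega⟩, rfl⟩
  obtain ⟨b, rfl⟩ : ∃ b : Fin m, b.addNat k = j :=
    ⟨⟨j - k, by omega⟩, Fin.ext (by rw [Fin.val_addNat, Fin.val_mk]; omega)⟩
  rw [Fin.val_castAdd, Fin.val_addNat] at hij
  rw [conjTranspose_blockDiagOne_mul_apply_castAdd]
  exact hQA (OrderDual.toDual_lt_toDual.mpr (Fin.lt_def.mpr (by omega)))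

theorem swap_lower_hessenberg_unitary {n k : ℕ} (hkn : k < n)
    (L U : Matrix (Fin n) (Fin n) ℂ)
    (hL : L ∈ Matrix.unitaryGroup (Fin n) ℂ)
    (hU : U ∈ Matrix.unitaryGroup (Fin n) ℂ) :
    ∃ V M : Matrix (Fin n) (Fin n) ℂ,
      V ∈ Matrix.unitaryGroup (Fin n) ℂ ∧
      M ∈ Matrix.unitaryGroup (Fin n) ℂ ∧
      IsKLowerHessenberg k M ∧
      (∀ i j : Fin n, n - k ≤ (i : ℕ) ∨ n - k ≤ (j : ℕ) → V i j = if i = j then 1 else 0) ∧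
      L * U = V * M := by
  obtain ⟨m, rfl⟩ : ∃ m, n = m + k := ⟨n - k, by omega⟩
  obtain ⟨Q, hQ, hQA⟩ := exists_mem_unitaryGroup_isLowerTriangular_conjTranspose_mul
    ((L * U).submatrix (Fin.castAdd k) (Fin.addNat · k))
  have hV := blockDiagOne_mem_unitaryGroup (k := k) hQ
  refine ⟨blockDiagOne Q k, (blockDiagOne Q k)ᴴ * (L * U), hV,
    mul_mem (Unitary.star_mem hV) (mul_mem hL hU),
    isKLowerHessenberg_conjTranspose_blockDiagOne_mul Q _ hQA,
    fun i j h ↦ blockDiagOne_apply_of_le Q (by simpa using h), ?_⟩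
  rw [← Matrix.mul_assoc, ← star_eq_conjTranspose, mem_unitaryGroup_iff.mp hV, Matrix.one_mul]
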